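/- Let d ≥ 1, let c : ℝ → ℝ^{d×d} with c(t) symmetric for all t, let A be a real d×d matrix, and let u : ℝ^{d+1} → ℝ be a C^2 function. Define v(t,y) = u(t, e^{tA} y). Then for all (t,y) ∈ ℝ × ℝ^d, ∂_t u(t, e^{tA}y) + Tr(c(t) D_x^2 u(t, e^{tA}y)) + ⟨A e^{tA} y, D_x u(t, e^{tA}y)⟩ = ∂_t v(t,y) + Tr(e^{-tA} c(t) e^{-tA^*} D_y^2 v(t,y)). -/

import Mathlib

open MeasureTheory ENNReal

/-- Time derivative `∂ₜ u` of `u : ℝ × ℝᵈ → ℝ` (time is the first coordinate). -/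
noncomputable def ptime {d : ℕ} (u : ℝ × (Fin d → ℝ) → ℝ) (z : ℝ × (Fin d → ℝ)) : ℝ :=
  deriv (fun s => u (s, z.2)) z.1

/-- Spatial partial derivative `∂_{xᵢ} u` of `u : ℝ × ℝᵈ → ℝ`. -/
noncomputable def pspace {d : ℕ} (i : Fin d) (u : ℝ × (Fin d → ℝ) → ℝ)
    (z : ℝ × (Fin d → ℝ)) : ℝ :=
  fderiv ℝ (fun y => u (z.1, y)) z.2 (Pi.single i 1)

/-- Second spatial partial derivative `∂²_{xᵢxⱼ} u` of `u : ℝ × ℝᵈ → ℝ`. -/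
noncomputable def pspace2 {d : ℕ} (i j : Fin d) (u : ℝ × (Fin d → ℝ) → ℝ) :
    ℝ × (Fin d → ℝ) → ℝ :=
  pspace i (pspace j u)

open Matrix

/-! Write `M = e^{tA}`, `H = D²ₓu(t, My)` and `N = e^{-tA} c(t) e^{-tA*}`. The substitution `x = My`
is linear in space, so the chain rule gives `D²_y v(t, y) = Mᵀ H M`, while the time derivative of `v`
picks up the drift `⟨A M y, Dₓu⟩` from `d/dt e^{tA} y = A e^{tA} y`. The diffusion terms agree
because `Tr(N Mᵀ H M) = Tr(M N Mᵀ H)` and `M N Mᵀ = c(t)`. -/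

open Finset

theorem ContinuousLinearMap.apply_eq_sum_smul_single {ι R M : Type*} [Fintype ι] [DecidableEq ι]
    [Semiring R] [TopologicalSpace R] [AddCommMonoid M] [Module R M] [TopologicalSpace M]
    (T : (ι → R) →L[R] M) (a : ι → R) :
    T a = ∑ i, a i • T (Pi.single i 1) := by
  conv_lhs => rw [← (Pi.basisFun R ι).sum_repr a]
  simp [map_sum, map_smul]

namespace Matrix

variable {m : Type*} [Fintype m] [DecidableEq m]

theorem hasDerivAt_exp_smul_mulVec (A : Matrix m m ℝ) (y : m → ℝ) (t : ℝ) :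
    HasDerivAt (fun s : ℝ => NormedSpace.exp (s • A) *ᵥ y)
      (A *ᵥ (NormedSpace.exp (t • A) *ᵥ y)) t := by
  -- Any submultiplicative norm on matrices will do: the claim does not mention it.
  let _ : NormedRing (Matrix m m ℝ) := Matrix.linftyOpNormedRing
  let _ : NormedAlgebra ℝ (Matrix m m ℝ) := Matrix.linftyOpNormedAlgebra
  have _ : CompleteSpace (Matrix m m ℝ) := FiniteDimensional.complete ℝ _
  rw [mulVec_mulVec]
  exact ((mulVecBilin ℝ ℝ).flip y).toContinuousLinearMap.hasFDerivAt.comp_hasDerivAt t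
    (hasDerivAt_exp_smul_const' A t)

theorem exp_smul_mul_exp_neg_smul (A : Matrix m m ℝ) (t : ℝ) :
    NormedSpace.exp (t • A) * NormedSpace.exp ((-t) • A) = 1 := by
  rw [← exp_add_of_commute _ _ (((Commute.refl A).smul_left t).smul_right (-t)), ← add_smul,
    add_neg_cancel, zero_smul, NormedSpace.exp_zero]

theorem exp_smul_mul_conj_mul_transpose (A C : Matrix m m ℝ) (t : ℝ) :
    NormedSpace.exp (t • A) * (NormedSpace.exp ((-t) • A) * C * NormedSpace.exp ((-t) • Aᵀ))
      * (NormedSpace.exp (t • A))ᵀ = C := by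
  have hT : NormedSpace.exp ((-t) • Aᵀ) * (NormedSpace.exp (t • A))ᵀ = 1 := by
    simpa [← exp_transpose] using exp_smul_mul_exp_neg_smul Aᵀ (-t)
  calc _ = NormedSpace.exp (t • A) * NormedSpace.exp ((-t) • A) * C
        * (NormedSpace.exp ((-t) • Aᵀ) * (NormedSpace.exp (t • A))ᵀ) := by
        simp only [Matrix.mul_assoc]
    _ = C := by rw [exp_smul_mul_exp_neg_smul, hT, one_mul, mul_one]

theorem sum_entry_mul_conj_eq {n R : Type*} [Fintype n] [CommSemiring R] (N M H : Matrix n n R) :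
    ∑ i, ∑ j, N i j * ∑ l, ∑ k, M l i * M k j * H l k
      = ∑ l, ∑ k, (M * N * Mᵀ) l k * H l k := by
  have hconj : ∀ i j, ∑ l, ∑ k, M l i * M k j * H l k = (Mᵀ * H * M) i j := fun i j => by
    simp only [mul_apply, transpose_apply, sum_mul]
    rw [sum_comm]
    exact sum_congr rfl fun _ _ => sum_congr rfl fun _ _ => by ring
  simp only [hconj, ← hadamard_apply, sum_hadamard_eq, transpose_mul, transpose_transpose,
    Matrix.mul_assoc]
  rw [trace_mul_comm M]
  simp only [Matrix.mul_assoc]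

end Matrix

section PartialDerivatives

variable {d : ℕ}

noncomputable def pspaceDir (a : Fin d → ℝ) (u : ℝ × (Fin d → ℝ) → ℝ)
    (z : ℝ × (Fin d → ℝ)) : ℝ :=
  fderiv ℝ (fun y => u (z.1, y)) z.2 a

theorem pspace_eq_pspaceDir (i : Fin d) (u : ℝ × (Fin d → ℝ) → ℝ) :
    pspace i u = pspaceDir (Pi.single i 1) u :=
  rfl

theorem pspaceDir_eq_sum (a : Fin d → ℝ) (u : ℝ × (Fin d → ℝ) → ℝ) (z : ℝ × (Fin d → ℝ)) :
    pspaceDir a u z = ∑ i, a i * pspace i u z :=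
  ContinuousLinearMap.apply_eq_sum_smul_single _ a

theorem pspaceDir_of_eq_comp_mulVec {M : Matrix (Fin d) (Fin d) ℝ}
    {u w : ℝ × (Fin d → ℝ) → ℝ} {t : ℝ} (hw : ∀ x, w (t, x) = u (t, M *ᵥ x))
    {x : Fin d → ℝ} (hu : DifferentiableAt ℝ (fun y => u (t, y)) (M *ᵥ x)) (a : Fin d → ℝ) :
    pspaceDir a w (t, x) = pspaceDir (M *ᵥ a) u (t, M *ᵥ x) := by
  have hL : HasFDerivAt (M *ᵥ ·) (toLin' M).toContinuousLinearMap x :=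
    (toLin' M).toContinuousLinearMap.hasFDerivAt
  simp only [pspaceDir, funext fun y => hw y]
  exact congrArg (· a) (hu.hasFDerivAt.comp x hL).fderiv

theorem pspaceDir_pspaceDir_eq_sum {u : ℝ × (Fin d → ℝ) → ℝ} {z : ℝ × (Fin d → ℝ)}
    (hu : DifferentiableAt ℝ (fderiv ℝ (fun y => u (z.1, y))) z.2) (a b : Fin d → ℝ) :
    pspaceDir a (pspaceDir b u) z = ∑ l, ∑ k, a l * b k * pspace2 l k u z := by
  have hsecond : ∀ a b, pspaceDir a (pspaceDir b u) z
      = fderiv ℝ (fderiv ℝ (fun y => u (z.1, y))) z.2 a b := fun a b => by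
    simp only [pspaceDir, fderiv_clm_apply hu (differentiableAt_const b)]
    simp
  set T := fderiv ℝ (fderiv ℝ (fun y => u (z.1, y))) z.2
  simp only [pspace2, pspace_eq_pspaceDir, hsecond]
  calc T a b = ∑ l, a l * T (Pi.single l 1) b := by
        rw [T.apply_eq_sum_smul_single a]; simp
    _ = ∑ l, ∑ k, a l * b k * T (Pi.single l 1) (Pi.single k 1) := by
        simp_rw [(T _).apply_eq_sum_smul_single b, smul_eq_mul, mul_sum, mul_assoc]

theorem contDiff_slice {u : ℝ × (Fin d → ℝ) → ℝ} {n : WithTop ℕ∞} (hu : ContDiff ℝ n u) (t : ℝ) :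
    ContDiff ℝ n (fun y => u (t, y)) :=
  hu.comp (contDiff_const.prodMk contDiff_id)

theorem pspace2_of_eq_comp_mulVec {M : Matrix (Fin d) (Fin d) ℝ}
    {u w : ℝ × (Fin d → ℝ) → ℝ} {t : ℝ} (hw : ∀ x, w (t, x) = u (t, M *ᵥ x))
    (hu : ContDiff ℝ 2 (fun y => u (t, y))) (i j : Fin d) (y : Fin d → ℝ) :
    pspace2 i j w (t, y) = ∑ l, ∑ k, M l i * M k j * pspace2 l k u (t, M *ᵥ y) := by
  have hDu : ContDiff ℝ 1 (fderiv ℝ (fun y => u (t, y))) := hu.fderiv_right (by norm_num)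
  have hDw : ∀ x, pspace j w (t, x) = pspaceDir (M *ᵥ Pi.single j 1) u (t, M *ᵥ x) :=
    fun x => pspaceDir_of_eq_comp_mulVec hw (hu.differentiable (by norm_num) _) _
  have hDuj : DifferentiableAt ℝ (fun x => pspaceDir (M *ᵥ Pi.single j 1) u (t, x)) (M *ᵥ y) :=
    ((hDu.differentiable one_ne_zero).clm_apply (differentiable_const _)) _
  rw [pspace2, pspace_eq_pspaceDir, pspaceDir_of_eq_comp_mulVec hDw hDuj,
    pspaceDir_pspaceDir_eq_sum (hDu.differentiable one_ne_zero _)]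
  simp only [mulVec_single_one, col_apply]

theorem fderiv_apply_one_eq_ptime_add_pspaceDir {u : ℝ × (Fin d → ℝ) → ℝ}
    {z : ℝ × (Fin d → ℝ)} (hu : DifferentiableAt ℝ u z) (w : Fin d → ℝ) :
    fderiv ℝ u z (1, w) = ptime u z + pspaceDir w u z := by
  have htime : ptime u z = fderiv ℝ u z (1, 0) :=
    (hu.hasFDerivAt.comp_hasDerivAt z.1 ((hasDerivAt_id _).prodMk (hasDerivAt_const _ _))).deriv
  have hspace : pspaceDir w u z = fderiv ℝ u z (0, w) := by
    have h : HasFDerivAt (fun y => u (z.1, y))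
        ((fderiv ℝ u z).comp (ContinuousLinearMap.inr ℝ ℝ (Fin d → ℝ))) z.2 :=
      hu.hasFDerivAt.comp z.2 (hasFDerivAt_prodMk_right z.1 z.2)
    simp [pspaceDir, h.fderiv]
  rw [htime, hspace, ← map_add]
  simp

theorem ptime_of_eq_comp_curve {u v : ℝ × (Fin d → ℝ) → ℝ} {y : Fin d → ℝ}
    {γ : ℝ → Fin d → ℝ} {γ' : Fin d → ℝ} {t : ℝ} (hv : ∀ s, v (s, y) = u (s, γ s))
    (hγ : HasDerivAt γ γ' t) (hu : DifferentiableAt ℝ u (t, γ t)) :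
    ptime v (t, y) = ptime u (t, γ t) + pspaceDir γ' u (t, γ t) := by
  rw [← fderiv_apply_one_eq_ptime_add_pspaceDir hu, ptime, funext hv]
  exact (hu.hasFDerivAt.comp_hasDerivAt t ((hasDerivAt_id t).prodMk hγ)).deriv

end PartialDerivatives

theorem change_of_variables_identity_general
    (d : ℕ)
    (c : ℝ → Matrix (Fin d) (Fin d) ℝ)
    (A : Matrix (Fin d) (Fin d) ℝ)
    (u : ℝ × (Fin d → ℝ) → ℝ) (hu : ContDiff ℝ 2 u)
    (v : ℝ × (Fin d → ℝ) → ℝ)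
    (hv : ∀ z : ℝ × (Fin d → ℝ), v z = u (z.1, (NormedSpace.exp (z.1 • A)).mulVec z.2))
    (t : ℝ) (y : Fin d → ℝ) :
    ptime u (t, (NormedSpace.exp (t • A)).mulVec y)
        + (∑ i, ∑ j, c t i j * pspace2 i j u (t, (NormedSpace.exp (t • A)).mulVec y))
        + ∑ i, A.mulVec ((NormedSpace.exp (t • A)).mulVec y) i
            * pspace i u (t, (NormedSpace.exp (t • A)).mulVec y)
      = ptime v (t, y)
        + ∑ i, ∑ j,
            (NormedSpace.exp ((-t) • A) * c t * NormedSpace.exp ((-t) • Aᵀ)) i j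
              * pspace2 i j v (t, y) := by
  have hvt : ∀ x, v (t, x) = u (t, NormedSpace.exp (t • A) *ᵥ x) := fun x => hv (t, x)
  rw [ptime_of_eq_comp_curve (fun s => hv (s, y)) (hasDerivAt_exp_smul_mulVec A y t)
      (hu.differentiable two_ne_zero _), pspaceDir_eq_sum]
  simp only [pspace2_of_eq_comp_mulVec hvt (contDiff_slice hu t)]
  rw [sum_entry_mul_conj_eq (H := fun l k => pspace2 l k u (t, _ *ᵥ y)),
    exp_smul_mul_conj_mul_transpose]
  ring

/-- change of variables `v(t,y) = u(t, e^{tA}y)` kills the drift.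
For `u` of class `C²` and `v(t,y) = u(t, e^{tA}y)`,
`∂ₜu(t,e^{tA}y) + Tr(c(t) D²ₓu(t,e^{tA}y)) + ⟨A e^{tA}y, Dₓu(t,e^{tA}y)⟩
  = ∂ₜv(t,y) + Tr(e^{-tA} c(t) e^{-tA^*} D²_y v(t,y))`. -/
theorem change_of_variables_identity
    (d : ℕ) (hd : 1 ≤ d)
    (c : ℝ → Matrix (Fin d) (Fin d) ℝ)
    (hsymm : ∀ t, (c t).IsSymm)
    (A : Matrix (Fin d) (Fin d) ℝ)
    (u : ℝ × (Fin d → ℝ) → ℝ) (hu : ContDiff ℝ 2 u)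
    (v : ℝ × (Fin d → ℝ) → ℝ)
    (hv : ∀ z : ℝ × (Fin d → ℝ), v z = u (z.1, (NormedSpace.exp (z.1 • A)).mulVec z.2))
    (t : ℝ) (y : Fin d → ℝ) :
    ptime u (t, (NormedSpace.exp (t • A)).mulVec y)
        + (∑ i, ∑ j, c t i j * pspace2 i j u (t, (NormedSpace.exp (t • A)).mulVec y))
        + ∑ i, A.mulVec ((NormedSpace.exp (t • A)).mulVec y) i
            * pspace i u (t, (NormedSpace.exp (t • A)).mulVec y)
      = ptime v (t, y)
        + ∑ i, ∑ j,
            (NormedSpace.exp ((-t) • A) * c t * NormedSpace.exp ((-t) • Aᵀ)) i j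
              * pspace2 i j v (t, y) :=
  change_of_variables_identity_general d c A u hu v hv t y
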